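/- arXiv:2004.06388 — 2 statements merged into one kernel-verified Lean document; each statement's English description precedes it below -/
import Mathlib

section
/- Let A ∈ ℝ^{m×n} and let A = P − R + S be a double proper weak splitting of type I of A with A†P ≥ 0, with iteration matrix W = [[P†R, −P†S],[I, 0]]. For each λ > 0 let B_λ = P_λ − R_λ + S_λ be a double weak splitting of type I of B_λ = AᵀA + λI with B_λ⁻¹P_λ ≥ 0, with iteration matrix W_λ = [[P_λ⁻¹R_λ, −P_λ⁻¹S_λ],[I, 0]]. Suppose that, as λ → 0⁺, P_λ⁻¹R_λ converges entrywise to a matrix R₀ with P†R ≥ R₀ and P_λ⁻¹S_λ converges entrywise to a matrix S₀ with S₀ ≥ P†S. Then ρ(W) < 1, and for every real number r such that ρ(W_λ) → r as λ → 0⁺, one has r ≤ ρ(W). -/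
/-!
Write `F = P†R ≥ 0`, `G = -P†S ≥ 0` and `H = F + G = P†(P - A)`. If `Wv = μv` with `|μ| ≥ 1`,
the lower half `y` of `v` satisfies `μ²y = (μF + G)y`, so `w = |y|` is a nonnegative vector with
`w ≤ Hw`. The range and null-space conditions give `PP†A = A` and `A†AP† = P†`, hence
`A†P = A†A + A†P·H` and `A†A·H = H`. For `u = Hw`, which satisfies `u ≤ Hu`, this yields
`u + A†P u ≤ A†P u` because `A†P ≥ 0`; so `u ≤ 0`, then `w = 0` and `v = 0`. Thus `ρ(W) < 1`.

For the second claim, `W_λ` converges to `W₀ = [[R₀, -S₀], [I, 0]]`, whose entries are bounded in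
absolute value by those of `W`, as `R₀` and `-S₀` are limits of nonnegative matrices. The spectrum
is upper hemicontinuous, so `lim ρ(W_λ) ≤ ρ(W₀)`, and `ρ(W₀) ≤ ρ(W)` by Gelfand's formula since
`|W₀ᵏ| ≤ Wᵏ` entrywise.
-/

open Matrix Filter Topology

/-- The spectral radius of a real square matrix: the maximum (supremum) of the
moduli of its complex eigenvalues. -/
noncomputable def specRad {n : Type*} [Fintype n] [DecidableEq n]
    (B : Matrix n n ℝ) : ℝ :=
  sSup ((fun z : ℂ => ‖z‖) '' spectrum ℂ (B.map Complex.ofReal))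

/-- Entrywise order on real matrices: `entryLE A B` means every entry of `A` is
at most the corresponding entry of `B`. -/
def entryLE {m n : Type*} (A B : Matrix m n ℝ) : Prop :=
  ∀ i j, A i j ≤ B i j

/-- `X` is the Moore–Penrose inverse of `A`. -/
def IsMoorePenrose {m n : Type*} [Fintype m] [Fintype n]
    (A : Matrix m n ℝ) (X : Matrix n m ℝ) : Prop :=
  A * X * A = A ∧ X * A * X = X ∧ (A * X)ᵀ = A * X ∧ (X * A)ᵀ = X * A

/-- Iteration matrix of a double weak splitting of type II:
`W̃ = [[(RP⁻¹)ᵀ, −(SP⁻¹)ᵀ],[I, 0]]`. -/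
noncomputable def itMatII {n : Type*} [Fintype n] [DecidableEq n]
    (P R S : Matrix n n ℝ) : Matrix (n ⊕ n) (n ⊕ n) ℝ :=
  Matrix.fromBlocks ((R * P⁻¹)ᵀ) (-((S * P⁻¹)ᵀ)) 1 0

/-- Iteration matrix of a double weak splitting of type I:
`Ŵ = [[P⁻¹R, −P⁻¹S],[I, 0]]`. -/
noncomputable def itMatI {n : Type*} [Fintype n] [DecidableEq n]
    (P R S : Matrix n n ℝ) : Matrix (n ⊕ n) (n ⊕ n) ℝ :=
  Matrix.fromBlocks (P⁻¹ * R) (-(P⁻¹ * S)) 1 0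

open scoped ENNReal

section EntrywiseBounds

variable {m n : Type*}

lemma mulVec_mono_of_nonneg [Fintype n] {M : Matrix m n ℝ} (hM : entryLE 0 M) {v w : n → ℝ}
    (h : v ≤ w) : M *ᵥ v ≤ M *ᵥ w :=
  fun i => Finset.sum_le_sum fun j _ => mul_le_mul_of_nonneg_left (h j) (hM i j)

lemma norm_mulVec_apply_le [Fintype n] {M : Matrix m n ℂ} {N : Matrix m n ℝ}
    (h : ∀ i j, ‖M i j‖ ≤ N i j) (y : n → ℂ) (i : m) :
    ‖(M *ᵥ y) i‖ ≤ (N *ᵥ fun j => ‖y j‖) i :=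
  (norm_sum_le _ _).trans <| Finset.sum_le_sum fun j _ => by
    rw [norm_mul]
    exact mul_le_mul_of_nonneg_right (h i j) (norm_nonneg _)

lemma abs_apply_le_of_tendsto {α : Type*} {l : Filter α} [l.NeBot] {M : α → Matrix m n ℝ}
    {M₀ N : Matrix m n ℝ} (hM : Tendsto M l (𝓝 M₀)) (hM0 : ∀ᶠ a in l, entryLE 0 (M a))
    (hN : entryLE M₀ N) (i : m) (j : n) : |M₀ i j| ≤ N i j := by
  have hlim : Tendsto (fun a => M a i j) l (𝓝 (M₀ i j)) := (hM.apply_nhds i).apply_nhds j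
  rw [abs_of_nonneg (ge_of_tendsto hlim (hM0.mono fun a h => h i j))]
  exact hN i j

lemma abs_fromBlocks_apply_le {l o : Type*} {A A' : Matrix n l ℝ} {B B' : Matrix n m ℝ}
    {C C' : Matrix o l ℝ} {D D' : Matrix o m ℝ} (hA : ∀ i j, |A' i j| ≤ A i j)
    (hB : ∀ i j, |B' i j| ≤ B i j) (hC : ∀ i j, |C' i j| ≤ C i j)
    (hD : ∀ i j, |D' i j| ≤ D i j) (i : n ⊕ o) (j : l ⊕ m) :
    |fromBlocks A' B' C' D' i j| ≤ fromBlocks A B C D i j := by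
  rcases i with i | i <;> rcases j with j | j
  exacts [hA i j, hB i j, hC i j, hD i j]

end EntrywiseBounds

section SpectralRadius

variable {ι : Type*} [Fintype ι] [DecidableEq ι]

lemma specRad_nonneg (B : Matrix ι ι ℝ) : 0 ≤ specRad B :=
  Real.sSup_nonneg (by rintro x ⟨μ, _, rfl⟩; exact norm_nonneg μ)

lemma norm_le_specRad {B : Matrix ι ι ℝ} {μ : ℂ}
    (h : μ ∈ spectrum ℂ (B.map Complex.ofReal)) : ‖μ‖ ≤ specRad B :=
  le_csSup ((B.map Complex.ofReal).finite_spectrum.image _).bddAbove ⟨μ, h, rfl⟩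

lemma specRad_lt {B : Matrix ι ι ℝ} {t : ℝ} (ht : 0 < t)
    (h : ∀ μ ∈ spectrum ℂ (B.map Complex.ofReal), ‖μ‖ < t) : specRad B < t := by
  obtain he | hne := (spectrum ℂ (B.map Complex.ofReal)).eq_empty_or_nonempty
  · simpa [specRad, he] using ht
  · obtain ⟨μ, hμ, hμB⟩ := (hne.image fun z : ℂ => ‖z‖).csSup_mem
      ((B.map Complex.ofReal).finite_spectrum.image _)
    rw [specRad, ← hμB]
    exact h μ hμ

lemma ofReal_specRad (B : Matrix ι ι ℝ) :
    ENNReal.ofReal (specRad B) = spectralRadius ℂ (B.map Complex.ofReal) := by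
  refine le_antisymm ?_ (iSup₂_le fun μ hμ => ?_)
  · obtain he | hne := (spectrum ℂ (B.map Complex.ofReal)).eq_empty_or_nonempty
    · simp [specRad, he]
    · obtain ⟨μ, hμ, hμB⟩ := (hne.image fun z : ℂ => ‖z‖).csSup_mem
        ((B.map Complex.ofReal).finite_spectrum.image _)
      rw [specRad, ← hμB]
      exact (ofReal_norm μ).trans_le (le_iSup₂ (f := fun μ _ => (‖μ‖₊ : ℝ≥0∞)) μ hμ)
  · exact (ofReal_norm μ).symm.trans_le (ENNReal.ofReal_le_ofReal (norm_le_specRad hμ))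

lemma map_ofReal_pow (B : Matrix ι ι ℝ) (k : ℕ) :
    B.map Complex.ofReal ^ k = (B ^ k).map Complex.ofReal :=
  (B.map_pow Complex.ofRealHom k).symm

lemma abs_pow_apply_le {B N : Matrix ι ι ℝ} (h : ∀ i j, |B i j| ≤ N i j) (k : ℕ) (i j : ι) :
    |(B ^ k) i j| ≤ (N ^ k) i j := by
  induction k generalizing j with
  | zero => by_cases hij : i = j <;> simp [one_apply, hij]
  | succ k ih =>
    simp only [pow_succ, mul_apply]
    refine (Finset.abs_sum_le_sum_abs _ _).trans (Finset.sum_le_sum fun l _ => ?_)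
    rw [abs_mul]
    exact mul_le_mul (ih l) (h l j) (abs_nonneg _) ((abs_nonneg _).trans (ih l))

section LinftyOpNorm

/- Gelfand's formula holds for any algebra norm; the `ℓ∞`-operator norm is chosen because it is
monotone in the absolute values of the entries. -/
attribute [local instance] Matrix.linftyOpNormedRing Matrix.linftyOpNormedAlgebra

lemma nnnorm_le_of_norm_apply_le {M N : Matrix ι ι ℂ} (h : ∀ i j, ‖M i j‖ ≤ ‖N i j‖) :
    ‖M‖₊ ≤ ‖N‖₊ := by
  rw [linfty_opNNNorm_def, linfty_opNNNorm_def]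
  exact Finset.sup_mono_fun fun i _ => Finset.sum_le_sum fun j _ => h i j

lemma specRad_le_of_abs_le {B N : Matrix ι ι ℝ} (h : ∀ i j, |B i j| ≤ N i j) :
    specRad B ≤ specRad N := by
  have hpow (k : ℕ) : ‖B.map Complex.ofReal ^ k‖₊ ≤ ‖N.map Complex.ofReal ^ k‖₊ :=
    nnnorm_le_of_norm_apply_le fun i j => by
      rw [map_ofReal_pow, map_ofReal_pow]
      simpa using (abs_pow_apply_le h k i j).trans (le_abs_self _)
  have := le_of_tendsto_of_tendsto'
    (spectrum.pow_nnnorm_pow_one_div_tendsto_nhds_spectralRadius (B.map Complex.ofReal))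
    (spectrum.pow_nnnorm_pow_one_div_tendsto_nhds_spectralRadius (N.map Complex.ofReal))
    fun k => ENNReal.rpow_le_rpow (ENNReal.coe_le_coe.2 (hpow k)) (by positivity)
  rwa [← ofReal_specRad, ← ofReal_specRad, ENNReal.ofReal_le_ofReal_iff (specRad_nonneg N)] at this

lemma upperSemicontinuous_specRad : UpperSemicontinuous (specRad : Matrix ι ι ℝ → ℝ) := by
  intro B y hy
  have hspec := (upperHemicontinuous_spectrum ℂ (Matrix ι ι ℂ)).comp
    (continuous_id.matrix_map Complex.continuous_ofReal)
  filter_upwards [hspec.forall_isOpen B (Metric.ball 0 y) Metric.isOpen_ball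
    fun μ hμ => by simpa using (norm_le_specRad hμ).trans_lt hy] with B' hB'
  exact specRad_lt ((specRad_nonneg B).trans_lt hy) fun μ hμ => by simpa using hB' hμ

end LinftyOpNorm

lemma le_specRad_of_tendsto {α : Type*} {l : Filter α} [l.NeBot] {M : α → Matrix ι ι ℝ}
    {M₀ : Matrix ι ι ℝ} (hM : Tendsto M l (𝓝 M₀)) {r : ℝ}
    (hr : Tendsto (fun a => specRad (M a)) l (𝓝 r)) : r ≤ specRad M₀ :=
  le_of_forall_gt_imp_ge_of_dense fun y hy =>
    le_of_tendsto hr ((hM.eventually (upperSemicontinuous_specRad M₀ y hy)).mono fun _ h => h.le)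

lemma exists_mulVec_eq_smul_of_mem_spectrum {M : Matrix ι ι ℂ} {μ : ℂ}
    (h : μ ∈ spectrum ℂ M) : ∃ v ≠ 0, M *ᵥ v = μ • v := by
  rw [← Matrix.spectrum_toLin', ← Module.End.hasEigenvalue_iff_mem_spectrum] at h
  obtain ⟨v, hv, hv0⟩ := h.exists_hasEigenvector
  exact ⟨v, hv0, by simpa using Module.End.mem_eigenspace_iff.1 hv⟩

theorem norm_lt_one_of_mem_spectrum_fromBlocks {F G : Matrix ι ι ℝ} (hF : entryLE 0 F)
    (hG : entryLE 0 G) (hFG : ∀ w : ι → ℝ, 0 ≤ w → w ≤ (F + G) *ᵥ w → w = 0) {μ : ℂ}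
    (hμ : μ ∈ spectrum ℂ ((fromBlocks F G 1 0 : Matrix (ι ⊕ ι) (ι ⊕ ι) ℝ).map Complex.ofReal)) :
    ‖μ‖ < 1 := by
  by_contra! hμ1
  obtain ⟨v, hv0, hv⟩ := exists_mulVec_eq_smul_of_mem_spectrum hμ
  obtain ⟨x, y, rfl⟩ : ∃ x y, v = Sum.elim x y := ⟨_, _, (Sum.elim_comp_inl_inr v).symm⟩
  rw [fromBlocks_map, fromBlocks_mulVec] at hv
  have hx : x = μ • y := funext fun i => by simpa using congrFun hv (Sum.inr i)
  have hxy : F.map Complex.ofReal *ᵥ x + G.map Complex.ofReal *ᵥ y = μ • x :=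
    funext fun i => by simpa using congrFun hv (Sum.inl i)
  have hy : (μ • F.map Complex.ofReal + G.map Complex.ofReal) *ᵥ y = μ ^ 2 • y := by
    rw [add_mulVec, smul_mulVec, ← mulVec_smul, ← hx, hxy, hx, smul_smul, sq]
  set w : ι → ℝ := fun i => ‖y i‖
  have hw0 : 0 ≤ w := fun i => norm_nonneg _
  have hentry (i j : ι) : ‖(μ • F.map Complex.ofReal + G.map Complex.ofReal) i j‖ ≤
      (‖μ‖ • F + G) i j := by
    simpa [abs_of_nonneg (hF i j), abs_of_nonneg (hG i j)] using norm_add_le (μ * F i j) (G i j)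
  have hw : w ≤ (F + G) *ᵥ w := fun i => by
    have hbound := norm_mulVec_apply_le hentry y i
    have hGw : 0 ≤ (G *ᵥ w) i := by simpa using mulVec_mono_of_nonneg hG hw0 i
    rw [hy, add_mulVec, smul_mulVec] at hbound
    simp only [Pi.smul_apply, smul_eq_mul, norm_mul, norm_pow, Pi.add_apply] at hbound
    change ‖μ‖ ^ 2 * w i ≤ ‖μ‖ * (F *ᵥ w) i + (G *ᵥ w) i at hbound
    rw [add_mulVec, Pi.add_apply]
    by_contra! hlt
    nlinarith [mul_nonneg (sub_nonneg.2 hμ1) hGw, mul_lt_mul_of_pos_left hlt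
      (one_pos.trans_le hμ1), mul_nonneg (sub_nonneg.2 hμ1) (mul_nonneg (norm_nonneg μ) (hw0 i))]
  have hy0 : y = 0 := funext fun i => norm_eq_zero.1 (congrFun (hFG w hw0 hw) i)
  exact hv0 (by simp [hx, hy0])

end SpectralRadius

section MoorePenrose

variable {m n : Type*} [Fintype m] [Fintype n]

lemma mul_mul_eq_of_range_le {R : Type*} [CommRing R] {A P : Matrix m n R} {Pdag : Matrix n m R}
    (hP : P * Pdag * P = P) (h : LinearMap.range A.mulVecLin ≤ LinearMap.range P.mulVecLin) :
    P * Pdag * A = A := by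
  refine ext_iff_mulVec.2 fun v => ?_
  obtain ⟨u, hu⟩ := h ⟨v, rfl⟩
  simp only [mulVecLin_apply] at hu
  rw [← mulVec_mulVec, ← hu, mulVec_mulVec, hP]

lemma mul_mul_eq_of_ker_le {R : Type*} [CommRing R] {A P : Matrix m n R} {Adag : Matrix n m R}
    (hA : A * Adag * A = A) (h : LinearMap.ker A.mulVecLin ≤ LinearMap.ker P.mulVecLin) :
    P * (Adag * A) = P := by
  refine ext_iff_mulVec.2 fun v => ?_
  have hv : (Adag * A) *ᵥ v - v ∈ LinearMap.ker P.mulVecLin := h <| by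
    rw [LinearMap.mem_ker, mulVecLin_apply, mulVec_sub, mulVec_mulVec, ← Matrix.mul_assoc, hA,
      sub_self]
  rwa [LinearMap.mem_ker, mulVecLin_apply, mulVec_sub, sub_eq_zero, mulVec_mulVec] at hv

lemma IsMoorePenrose.mul_eq_of_mul_eq {P : Matrix m n ℝ} {Pdag : Matrix n m ℝ}
    (hP : IsMoorePenrose P Pdag) {M : Matrix n n ℝ} (hM : Mᵀ = M) (h : P * M = P) :
    M * Pdag = Pdag := by
  have hMP : M * Pᵀ = Pᵀ := by rw [← hM, ← transpose_mul, h]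
  have hPdag : Pdag = Pᵀ * (Pdagᵀ * Pdag) := by
    calc Pdag = Pdag * P * Pdag := hP.2.1.symm
      _ = (Pdag * P)ᵀ * Pdag := by rw [hP.2.2.2]
      _ = Pᵀ * (Pdagᵀ * Pdag) := by rw [transpose_mul, Matrix.mul_assoc]
  rw [hPdag, ← Matrix.mul_assoc, hMP]

variable {A P : Matrix m n ℝ} {Adag Pdag : Matrix n m ℝ}

theorem eq_zero_of_le_pinv_mul_sub_mulVec (hA : IsMoorePenrose A Adag) (hP : IsMoorePenrose P Pdag)
    (hrange : LinearMap.range A.mulVecLin ≤ LinearMap.range P.mulVecLin)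
    (hker : LinearMap.ker A.mulVecLin ≤ LinearMap.ker P.mulVecLin)
    (hAP : entryLE 0 (Adag * P)) (hH : entryLE 0 (Pdag * (P - A)))
    {w : n → ℝ} (hw : 0 ≤ w) (hwH : w ≤ (Pdag * (P - A)) *ᵥ w) : w = 0 := by
  set H := Pdag * (P - A)
  set u := H *ᵥ w
  have hAAH : Adag * A * H = H := by
    rw [← Matrix.mul_assoc, hP.mul_eq_of_mul_eq hA.2.2.2 (mul_mul_eq_of_ker_le hA.1 hker)]
  have hAAu : (Adag * A) *ᵥ u = u := by rw [mulVec_mulVec, hAAH]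
  have hu : (Adag * P) *ᵥ u ≤ (Adag * P) *ᵥ (H *ᵥ u) :=
    mulVec_mono_of_nonneg hAP (mulVec_mono_of_nonneg hH hwH)
  have hPH : P * H = P - A := by
    rw [← Matrix.mul_assoc, Matrix.mul_sub, hP.1, mul_mul_eq_of_range_le hP.1 hrange]
  have hsplit : Adag * P = Adag * A + Adag * P * H := by
    rw [Matrix.mul_assoc, hPH, Matrix.mul_sub]
    abel
  have hPu : (Adag * P) *ᵥ u = u + (Adag * P) *ᵥ (H *ᵥ u) := by
    conv_lhs => rw [hsplit]
    rw [add_mulVec, hAAu, ← mulVec_mulVec u (Adag * P) H]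
  have hu0 : u ≤ 0 := fun i => by
    show u i ≤ 0
    have := congrFun hPu i
    simp only [Pi.add_apply] at this
    linarith [hu i]
  exact le_antisymm (hwH.trans hu0) hw

end MoorePenrose

theorem stmt16_general {m n : ℕ} (A P R S : Matrix (Fin m) (Fin n) ℝ)
    (Adag Pdag : Matrix (Fin n) (Fin m) ℝ)
    (hAdag : IsMoorePenrose A Adag) (hPdag : IsMoorePenrose P Pdag)
    -- `A = P − R + S` is a double proper weak splitting of type I with `A†P ≥ 0`
    (hsplit : A = P - R + S)
    (hrange : LinearMap.range P.mulVecLin = LinearMap.range A.mulVecLin)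
    (hker : LinearMap.ker P.mulVecLin = LinearMap.ker A.mulVecLin)
    (hPR : entryLE 0 (Pdag * R)) (hPS : entryLE (Pdag * S) 0)
    (hAP : entryLE 0 (Adag * P))
    -- for each `λ > 0`, `B_λ = P_λ − R_λ + S_λ` is a double weak splitting of
    -- type I of `B_λ = AᵀA + λI` with `B_λ⁻¹P_λ ≥ 0`
    (Plam Rlam Slam : ℝ → Matrix (Fin n) (Fin n) ℝ)
    (hRl : ∀ l : ℝ, 0 < l → entryLE 0 ((Plam l)⁻¹ * Rlam l))
    (hSl : ∀ l : ℝ, 0 < l → entryLE 0 (-((Plam l)⁻¹ * Slam l)))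
    -- `P_λ⁻¹R_λ → R₀` entrywise as `λ → 0⁺`, with `P†R ≥ R₀`
    (R₀ : Matrix (Fin n) (Fin n) ℝ)
    (hR0tend : Tendsto (fun l : ℝ => (Plam l)⁻¹ * Rlam l) (𝓝[>] 0) (𝓝 R₀))
    (hR0 : entryLE R₀ (Pdag * R))
    -- `P_λ⁻¹S_λ → S₀` entrywise as `λ → 0⁺`, with `S₀ ≥ P†S`
    (S₀ : Matrix (Fin n) (Fin n) ℝ)
    (hS0tend : Tendsto (fun l : ℝ => (Plam l)⁻¹ * Slam l) (𝓝[>] 0) (𝓝 S₀))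
    (hS0 : entryLE (Pdag * S) S₀) :
    specRad (Matrix.fromBlocks (Pdag * R) (-(Pdag * S)) 1 0) < 1 ∧
      ∀ r : ℝ, Tendsto (fun l : ℝ => specRad (itMatI (Plam l) (Rlam l) (Slam l)))
          (𝓝[>] 0) (𝓝 r) →
        r ≤ specRad (Matrix.fromBlocks (Pdag * R) (-(Pdag * S)) 1 0) := by
  have hG : entryLE 0 (-(Pdag * S)) := fun i j => by simpa using hPS i j
  have hFG : Pdag * R + -(Pdag * S) = Pdag * (P - A) := by
    rw [hsplit, Matrix.mul_sub, Matrix.mul_add, Matrix.mul_sub]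
    abel
  have hH : entryLE 0 (Pdag * (P - A)) := hFG ▸ fun i j => add_nonneg (hPR i j) (hG i j)
  refine ⟨specRad_lt one_pos fun μ => norm_lt_one_of_mem_spectrum_fromBlocks hPR hG fun w hw hwH =>
    eq_zero_of_le_pinv_mul_sub_mulVec hAdag hPdag hrange.ge hker.ge hAP hH hw (hFG ▸ hwH),
    fun r hr => ?_⟩
  have hlim : Tendsto (fun l => itMatI (Plam l) (Rlam l) (Slam l)) (𝓝[>] 0)
      (𝓝 (fromBlocks R₀ (-S₀) 1 0)) :=
    ((continuous_fst.matrix_fromBlocks continuous_snd.neg continuous_const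
      continuous_const).tendsto (R₀, S₀)).comp (hR0tend.prodMk_nhds hS0tend)
  have hRbound := abs_apply_le_of_tendsto hR0tend (eventually_nhdsWithin_of_forall hRl) hR0
  have hSbound : ∀ i j, |(-S₀) i j| ≤ (-(Pdag * S)) i j :=
    abs_apply_le_of_tendsto hS0tend.neg (eventually_nhdsWithin_of_forall hSl) fun i j => by
      simpa using hS0 i j
  have hone (i j : Fin n) : |(1 : Matrix (Fin n) (Fin n) ℝ) i j| ≤ (1 : Matrix _ _ ℝ) i j := by
    by_cases hij : i = j <;> simp [one_apply, hij]
  exact (le_specRad_of_tendsto hlim hr).trans <| specRad_le_of_abs_le <|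
    abs_fromBlocks_apply_le hRbound hSbound hone fun i j => by simp

theorem stmt16 {m n : ℕ} (A P R S : Matrix (Fin m) (Fin n) ℝ)
    (Adag Pdag : Matrix (Fin n) (Fin m) ℝ)
    (hAdag : IsMoorePenrose A Adag) (hPdag : IsMoorePenrose P Pdag)
    -- `A = P − R + S` is a double proper weak splitting of type I with `A†P ≥ 0`
    (hsplit : A = P - R + S)
    (hrange : LinearMap.range P.mulVecLin = LinearMap.range A.mulVecLin)
    (hker : LinearMap.ker P.mulVecLin = LinearMap.ker A.mulVecLin)
    (hPR : entryLE 0 (Pdag * R)) (hPS : entryLE (Pdag * S) 0)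
    (hAP : entryLE 0 (Adag * P))
    -- for each `λ > 0`, `B_λ = P_λ − R_λ + S_λ` is a double weak splitting of
    -- type I of `B_λ = AᵀA + λI` with `B_λ⁻¹P_λ ≥ 0`
    (Plam Rlam Slam : ℝ → Matrix (Fin n) (Fin n) ℝ)
    (hBsplit : ∀ l : ℝ, 0 < l →
      Aᵀ * A + l • (1 : Matrix (Fin n) (Fin n) ℝ) = Plam l - Rlam l + Slam l)
    (hPinv : ∀ l : ℝ, 0 < l → IsUnit (Plam l).det)
    (hRl : ∀ l : ℝ, 0 < l → entryLE 0 ((Plam l)⁻¹ * Rlam l))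
    (hSl : ∀ l : ℝ, 0 < l → entryLE 0 (-((Plam l)⁻¹ * Slam l)))
    (hBP : ∀ l : ℝ, 0 < l →
      entryLE 0 ((Aᵀ * A + l • (1 : Matrix (Fin n) (Fin n) ℝ))⁻¹ * Plam l))
    -- `P_λ⁻¹R_λ → R₀` entrywise as `λ → 0⁺`, with `P†R ≥ R₀`
    (R₀ : Matrix (Fin n) (Fin n) ℝ)
    (hR0tend : Tendsto (fun l : ℝ => (Plam l)⁻¹ * Rlam l) (𝓝[>] 0) (𝓝 R₀))
    (hR0 : entryLE R₀ (Pdag * R))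
    -- `P_λ⁻¹S_λ → S₀` entrywise as `λ → 0⁺`, with `S₀ ≥ P†S`
    (S₀ : Matrix (Fin n) (Fin n) ℝ)
    (hS0tend : Tendsto (fun l : ℝ => (Plam l)⁻¹ * Slam l) (𝓝[>] 0) (𝓝 S₀))
    (hS0 : entryLE (Pdag * S) S₀) :
    specRad (Matrix.fromBlocks (Pdag * R) (-(Pdag * S)) 1 0) < 1 ∧
      ∀ r : ℝ, Tendsto (fun l : ℝ => specRad (itMatI (Plam l) (Rlam l) (Slam l)))
          (𝓝[>] 0) (𝓝 r) →
        r ≤ specRad (Matrix.fromBlocks (Pdag * R) (-(Pdag * S)) 1 0) :=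
  stmt16_general A P R S Adag Pdag hAdag hPdag hsplit hrange hker hPR hPS hAP Plam Rlam Slam hRl hSl
    R₀ hR0tend hR0 S₀ hS0tend hS0
end

section
/- Let A ∈ ℝ^{m×n}, b ∈ ℝ^{m}, λ > 0, and let B_λ = M_λ − N_λ be a weak splitting of the first type of B_λ = AᵀA + λI (so M_λ is invertible and M_λ⁻¹N_λ ≥ 0) with B_λ⁻¹N_λ ≥ 0. Then ρ(M_λ⁻¹N_λ) < 1, and for every initial vector x⁰ ∈ ℝⁿ the iteration x^{k+1} = M_λ⁻¹N_λ x^{k} + M_λ⁻¹Aᵀb converges, as k → ∞, to B_λ⁻¹Aᵀb. Moreover B_λ⁻¹Aᵀb → A†b as λ → 0⁺. -/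
/-!
For `T = M⁻¹N` and `C = 1 + B⁻¹N = B⁻¹M` one has `(1 - T) C = 1`. As `T ≥ 0` and `C ≥ 0`,
the partial sums of `∑ T ^ k` are bounded by `C` entrywise, so `T ^ k → 0`. This forces every
eigenvalue of `T` into the open unit disc, and makes the error `T ^ k (x⁰ - x⋆)` of the
iteration vanish, where `x⋆ = B⁻¹Aᵀb` is its fixed point.
-/

open Matrix Filter Topology

section EntrywiseNonneg

variable {ι : Type*}

lemma entryLE_zero_mul [Fintype ι] {P Q : Matrix ι ι ℝ} (hP : entryLE 0 P)
    (hQ : entryLE 0 Q) : entryLE 0 (P * Q) := fun i j =>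
  Finset.sum_nonneg fun k _ => mul_nonneg (hP i k) (hQ k j)

lemma entryLE_zero_one [DecidableEq ι] : entryLE 0 (1 : Matrix ι ι ℝ) := fun i j => by
  rw [one_apply]; split_ifs <;> simp

variable [Fintype ι] [DecidableEq ι]

lemma entryLE_zero_pow {T : Matrix ι ι ℝ} (hT : entryLE 0 T) (k : ℕ) : entryLE 0 (T ^ k) := by
  induction k with
  | zero => exact entryLE_zero_one
  | succ k ih => rw [pow_succ]; exact entryLE_zero_mul ih hT

theorem tendsto_pow_of_entryLE_zero_of_one_sub_mul {T C : Matrix ι ι ℝ}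
    (hT : entryLE 0 T) (hC : entryLE 0 C) (hTC : (1 - T) * C = 1) :
    Tendsto (fun k => T ^ k) atTop (𝓝 0) := by
  have hgeom (K : ℕ) : ∑ k ∈ Finset.range K, T ^ k = C - T ^ K * C := by
    rw [← mul_one (∑ k ∈ _, _), ← hTC, ← mul_assoc, geom_sum_mul_neg, sub_mul, one_mul]
  refine tendsto_pi_nhds.2 fun i => tendsto_pi_nhds.2 fun j => ?_
  refine (summable_of_sum_range_le (c := C i j) (fun k => entryLE_zero_pow hT k i j)
    fun K => ?_).tendsto_atTop_zero
  have hK := congrFun (congrFun (hgeom K) i) j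
  simp only [Matrix.sum_apply, Matrix.sub_apply] at hK
  rw [hK, sub_le_self_iff]
  exact entryLE_zero_mul (entryLE_zero_pow hT K) hC i j

end EntrywiseNonneg

section Splitting

variable {ι : Type*} [Fintype ι] [DecidableEq ι] {B M N : Matrix ι ι ℝ}

lemma one_sub_inv_mul_eq_inv_mul_of_eq_sub (h : B = M - N) (hM : IsUnit M.det) :
    1 - M⁻¹ * N = M⁻¹ * B := by
  rw [h, mul_sub, nonsing_inv_mul _ hM]

lemma one_sub_inv_mul_mul_one_add_inv_mul_of_eq_sub (h : B = M - N) (hB : IsUnit B.det)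
    (hM : IsUnit M.det) : (1 - M⁻¹ * N) * (1 + B⁻¹ * N) = 1 := by
  have hBM : 1 + B⁻¹ * N = B⁻¹ * M := by
    rw [sub_eq_iff_eq_add.1 h.symm, mul_add, nonsing_inv_mul _ hB, add_comm]
  rw [hBM, one_sub_inv_mul_eq_inv_mul_of_eq_sub h hM, mul_assoc, ← mul_assoc B,
    mul_nonsing_inv _ hB, one_mul, nonsing_inv_mul _ hM]

lemma inv_mul_mul_inv_add_inv_of_eq_sub (h : B = M - N) (hB : IsUnit B.det)
    (hM : IsUnit M.det) : M⁻¹ * N * B⁻¹ + M⁻¹ = B⁻¹ := by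
  have := congrArg (· * B⁻¹) (one_sub_inv_mul_eq_inv_mul_of_eq_sub h hM)
  simp only [sub_mul, one_mul, mul_assoc, mul_nonsing_inv _ hB, mul_one] at this
  rw [mul_assoc]
  exact (sub_eq_iff_eq_add'.1 this).symm

theorem tendsto_pow_inv_mul_of_weakSplitting (h : B = M - N) (hB : IsUnit B.det)
    (hM : IsUnit M.det) (hMN : entryLE 0 (M⁻¹ * N)) (hBN : entryLE 0 (B⁻¹ * N)) :
    Tendsto (fun k => (M⁻¹ * N) ^ k) atTop (𝓝 0) := by
  refine tendsto_pow_of_entryLE_zero_of_one_sub_mul hMN (fun i j => ?_)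
    (one_sub_inv_mul_mul_one_add_inv_mul_of_eq_sub h hB hM)
  rw [Matrix.add_apply]
  exact add_nonneg (entryLE_zero_one i j) (hBN i j)

end Splitting

section PowersTendstoZero

variable {ι : Type*} [Fintype ι] [DecidableEq ι] {T : Matrix ι ι ℝ}

lemma norm_lt_one_of_mem_spectrum_of_tendsto_pow (hT : Tendsto (fun k => T ^ k) atTop (𝓝 0))
    {z : ℂ} (hz : z ∈ spectrum ℂ (T.map Complex.ofReal)) : ‖z‖ < 1 := by
  set Tc := T.map Complex.ofReal
  rw [← spectrum_toLin', ← Module.End.hasEigenvalue_iff_mem_spectrum] at hz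
  obtain ⟨v, hv⟩ := hz.exists_hasEigenvector
  obtain ⟨i, hvi⟩ : ∃ i, v i ≠ 0 := Function.ne_iff.1 hv.2
  have hpow (k : ℕ) : Tc ^ k *ᵥ v = z ^ k • v := by
    induction k with
    | zero => simp
    | succ k ih =>
      rw [pow_succ', ← mulVec_mulVec, ih, mulVec_smul, ← toLin'_apply, hv.apply_eq_smul,
        smul_smul, pow_succ]
  have hlim : Tendsto (fun k => (Tc ^ k *ᵥ v) i) atTop (𝓝 0) := by
    have hc : Continuous fun P : Matrix ι ι ℝ => (P.map Complex.ofReal *ᵥ v) i :=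
      (continuous_apply i).comp
        ((continuous_id.matrix_map Complex.continuous_ofReal).matrix_mulVec continuous_const)
    have hmap (k : ℕ) : Tc ^ k = (T ^ k).map Complex.ofReal :=
      (Matrix.map_pow T Complex.ofRealHom k).symm
    simp only [hmap]
    simpa [Function.comp_def] using (hc.tendsto 0).comp hT
  simp only [hpow, Pi.smul_apply, smul_eq_mul] at hlim
  refine tendsto_pow_atTop_nhds_zero_iff_norm_lt_one.1 ?_
  simpa [mul_assoc, hvi] using hlim.mul_const (v i)⁻¹

theorem specRad_lt_one_of_tendsto_pow (hT : Tendsto (fun k => T ^ k) atTop (𝓝 0)) :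
    specRad T < 1 := by
  rcases ((fun z : ℂ => ‖z‖) '' spectrum ℂ (T.map Complex.ofReal)).eq_empty_or_nonempty
    with hempty | hne
  · rw [specRad, hempty, Real.sSup_empty]
    exact one_pos
  · rw [specRad, ((finite_spectrum _).image _).csSup_lt_iff hne]
    rintro _ ⟨z, hz, rfl⟩
    exact norm_lt_one_of_mem_spectrum_of_tendsto_pow hT hz

theorem tendsto_of_iterate_of_tendsto_pow (hT : Tendsto (fun k => T ^ k) atTop (𝓝 0))
    {c y : ι → ℝ} (hy : T *ᵥ y + c = y) {x : ℕ → ι → ℝ}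
    (hx : ∀ k, x (k + 1) = T *ᵥ x k + c) : Tendsto x atTop (𝓝 y) := by
  have herr (k : ℕ) : x k = y + T ^ k *ᵥ (x 0 - y) := by
    induction k with
    | zero => simp
    | succ k ih =>
      rw [hx, ih, mulVec_add, mulVec_mulVec, ← pow_succ', add_right_comm, hy]
  have hc : Continuous fun P : Matrix ι ι ℝ => y + P *ᵥ (x 0 - y) :=
    continuous_const.add (continuous_id.matrix_mulVec continuous_const)
  have := (hc.tendsto 0).comp hT
  simp only [Function.comp_def, zero_mulVec, add_zero, ← herr] at this
  exact this

end PowersTendstoZero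

section Tikhonov

variable {κ ι : Type*} [Fintype κ] [Fintype ι]

lemma dotProduct_transpose_mul_self_mulVec_nonneg (A : Matrix κ ι ℝ) (w : ι → ℝ) :
    0 ≤ w ⬝ᵥ ((Aᵀ * A) *ᵥ w) := by
  rw [← mulVec_mulVec, dotProduct_mulVec, vecMul_transpose]
  exact Finset.sum_nonneg fun _ _ => mul_self_nonneg _

lemma norm_le_sqrt_dotProduct_self (v : ι → ℝ) : ‖v‖ ≤ √(v ⬝ᵥ v) := by
  refine (pi_norm_le_iff_of_nonneg (Real.sqrt_nonneg _)).2 fun i => ?_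
  rw [Real.norm_eq_abs]
  refine Real.abs_le_sqrt ?_
  rw [sq]
  exact Finset.single_le_sum (f := fun j => v j * v j) (fun j _ => mul_self_nonneg (v j))
    (Finset.mem_univ i)

variable [DecidableEq ι] (A : Matrix κ ι ℝ) {t : ℝ}

lemma isUnit_det_transpose_mul_self_add_smul_one (ht : 0 < t) :
    IsUnit (Aᵀ * A + t • (1 : Matrix ι ι ℝ)).det := by
  have hAA : (Aᵀ * A).PosSemidef := by simpa using posSemidef_conjTranspose_mul_self A
  have ht1 : (t • (1 : Matrix ι ι ℝ)).PosDef := by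
    rw [smul_one_eq_diagonal]
    exact PosDef.diagonal fun _ => ht
  exact (isUnit_iff_isUnit_det _).1 (ht1.posSemidef_add hAA).isUnit

/-- Since `w ⬝ᵥ ((Aᵀ * A) *ᵥ w) ≥ 0`, the cross term in `‖Aᵀ A w + t w‖²` is nonnegative. -/
lemma sq_mul_dotProduct_self_le (ht : 0 ≤ t) (w : ι → ℝ) :
    t ^ 2 * (w ⬝ᵥ w) ≤
      ((Aᵀ * A + t • (1 : Matrix ι ι ℝ)) *ᵥ w) ⬝ᵥ ((Aᵀ * A + t • (1 : Matrix ι ι ℝ)) *ᵥ w) := by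
  set P := (Aᵀ * A) *ᵥ w
  have hP : 0 ≤ P ⬝ᵥ P := Finset.sum_nonneg fun _ _ => mul_self_nonneg _
  have hwP : 0 ≤ w ⬝ᵥ P := dotProduct_transpose_mul_self_mulVec_nonneg A w
  have hBw : (Aᵀ * A + t • (1 : Matrix ι ι ℝ)) *ᵥ w = P + t • w := by
    rw [add_mulVec, smul_mulVec, one_mulVec]
  simp only [hBw, add_dotProduct, dotProduct_add, smul_dotProduct, dotProduct_smul, smul_eq_mul,
    dotProduct_comm P w]
  nlinarith [mul_nonneg ht hwP]

lemma norm_smul_inv_mulVec_le (ht : 0 < t) (u : ι → ℝ) :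
    ‖t • ((Aᵀ * A + t • (1 : Matrix ι ι ℝ))⁻¹ *ᵥ u)‖ ≤ √(u ⬝ᵥ u) := by
  set B := Aᵀ * A + t • (1 : Matrix ι ι ℝ)
  set w := B⁻¹ *ᵥ u
  have hBw : B *ᵥ w = u := by
    rw [mulVec_mulVec, mul_nonsing_inv _ (isUnit_det_transpose_mul_self_add_smul_one A ht),
      one_mulVec]
  refine (norm_le_sqrt_dotProduct_self _).trans (Real.sqrt_le_sqrt ?_)
  rw [smul_dotProduct, dotProduct_smul, smul_eq_mul, smul_eq_mul, ← mul_assoc, ← sq, ← hBw]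
  exact sq_mul_dotProduct_self_le A ht.le w

lemma inv_mulVec_transpose_mul_self_mulVec (ht : 0 < t) (v : ι → ℝ) :
    (Aᵀ * A + t • (1 : Matrix ι ι ℝ))⁻¹ *ᵥ ((Aᵀ * A) *ᵥ v) =
      v - t • ((Aᵀ * A + t • (1 : Matrix ι ι ℝ))⁻¹ *ᵥ v) := by
  set B := Aᵀ * A + t • (1 : Matrix ι ι ℝ)
  rw [show Aᵀ * A = B - t • 1 by simp [B], sub_mulVec, mulVec_sub, mulVec_mulVec,
    nonsing_inv_mul _ (isUnit_det_transpose_mul_self_add_smul_one A ht), one_mulVec,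
    smul_mulVec, one_mulVec, mulVec_smul]

end Tikhonov

namespace IsMoorePenrose

variable {κ ι : Type*} [Fintype κ] [Fintype ι] {A : Matrix κ ι ℝ} {X : Matrix ι κ ℝ}

lemma transpose_mul_self_mul (hX : IsMoorePenrose A X) : Aᵀ * A * X = Aᵀ := by
  obtain ⟨hAXA, -, hAX, -⟩ := hX
  rw [Matrix.mul_assoc, ← hAX, ← transpose_mul, hAXA]

lemma transpose_mul_self_mul_mul_transpose_mul (hX : IsMoorePenrose A X) :
    Aᵀ * A * (X * Xᵀ * X) = X := by
  rw [← Matrix.mul_assoc, ← Matrix.mul_assoc, hX.transpose_mul_self_mul, ← transpose_mul,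
    hX.2.2.2, hX.2.1]

end IsMoorePenrose

/-- With `y = X b` and `u = X Xᵀ X b` one has `Aᵀ b = Aᵀ A y` and `y = Aᵀ A u`, so that
`(Aᵀ A + t)⁻¹ Aᵀ b = y - t u + t (t (Aᵀ A + t)⁻¹ u)`, and `t (Aᵀ A + t)⁻¹` is bounded. -/
theorem IsMoorePenrose.tendsto_inv_transpose_mul_self_add_smul_one_mulVec {κ ι : Type*}
    [Fintype κ] [Fintype ι] [DecidableEq ι] {A : Matrix κ ι ℝ} {X : Matrix ι κ ℝ}
    (hX : IsMoorePenrose A X) (b : κ → ℝ) :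
    Tendsto (fun t : ℝ => (Aᵀ * A + t • (1 : Matrix ι ι ℝ))⁻¹ *ᵥ (Aᵀ *ᵥ b)) (𝓝[>] 0)
      (𝓝 (X *ᵥ b)) := by
  set y := X *ᵥ b
  set u := (X * Xᵀ * X) *ᵥ b
  have hAb : Aᵀ *ᵥ b = (Aᵀ * A) *ᵥ y := by rw [mulVec_mulVec, hX.transpose_mul_self_mul]
  have hyu : y = (Aᵀ * A) *ᵥ u := by
    rw [mulVec_mulVec, hX.transpose_mul_self_mul_mul_transpose_mul]
  have hexpand : ∀ t : ℝ, 0 < t → (Aᵀ * A + t • (1 : Matrix ι ι ℝ))⁻¹ *ᵥ (Aᵀ *ᵥ b) =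
      y - t • u + t • (t • ((Aᵀ * A + t • (1 : Matrix ι ι ℝ))⁻¹ *ᵥ u)) := by
    intro t ht
    have hy := inv_mulVec_transpose_mul_self_mulVec A ht u
    rw [← hyu] at hy
    rw [hAb, inv_mulVec_transpose_mul_self_mulVec A ht, hy, smul_sub]
    abel
  have ht : Tendsto (fun t : ℝ => t) (𝓝[>] 0) (𝓝 0) := nhdsWithin_le_nhds
  have hbdd := isBoundedUnder_of_eventually_le (f := 𝓝[>] (0 : ℝ))
    (eventually_nhdsWithin_of_forall fun t (ht : 0 < t) => norm_smul_inv_mulVec_le A ht u)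
  have hlim := (tendsto_const_nhds (x := y)).sub (ht.smul_const u) |>.add
    (ht.zero_smul_isBoundedUnder_le hbdd)
  rw [zero_smul, sub_zero, add_zero] at hlim
  exact hlim.congr' <| eventually_nhdsWithin_of_forall (s := Set.Ioi 0) fun t ht =>
    (hexpand t ht).symm

theorem stmt19 {m n : ℕ} (A : Matrix (Fin m) (Fin n) ℝ) (b : Fin m → ℝ)
    (Adag : Matrix (Fin n) (Fin m) ℝ) (hAdag : IsMoorePenrose A Adag)
    (l : ℝ) (hl : 0 < l)
    (Ml Nl : Matrix (Fin n) (Fin n) ℝ)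
    -- `B_λ = M_λ − N_λ` is a weak splitting of the first type with `B_λ⁻¹N_λ ≥ 0`
    (hBsplit : Aᵀ * A + l • (1 : Matrix (Fin n) (Fin n) ℝ) = Ml - Nl)
    (hMinv : IsUnit Ml.det)
    (hweak : entryLE 0 (Ml⁻¹ * Nl))
    (hBN : entryLE 0 ((Aᵀ * A + l • (1 : Matrix (Fin n) (Fin n) ℝ))⁻¹ * Nl)) :
    specRad (Ml⁻¹ * Nl) < 1 ∧
      (∀ x : ℕ → (Fin n → ℝ),
        (∀ k : ℕ, x (k + 1) = (Ml⁻¹ * Nl) *ᵥ x k + Ml⁻¹ *ᵥ (Aᵀ *ᵥ b)) →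
        Tendsto x atTop
          (𝓝 ((Aᵀ * A + l • (1 : Matrix (Fin n) (Fin n) ℝ))⁻¹ *ᵥ (Aᵀ *ᵥ b)))) ∧
      Tendsto
        (fun t : ℝ => (Aᵀ * A + t • (1 : Matrix (Fin n) (Fin n) ℝ))⁻¹ *ᵥ (Aᵀ *ᵥ b))
        (𝓝[>] 0) (𝓝 (Adag *ᵥ b)) := by
  have hB := isUnit_det_transpose_mul_self_add_smul_one A hl
  have hpow := tendsto_pow_inv_mul_of_weakSplitting hBsplit hB hMinv hweak hBN
  refine ⟨specRad_lt_one_of_tendsto_pow hpow, fun x hx => ?_,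
    hAdag.tendsto_inv_transpose_mul_self_add_smul_one_mulVec b⟩
  refine tendsto_of_iterate_of_tendsto_pow hpow ?_ hx
  rw [mulVec_mulVec, ← add_mulVec, inv_mul_mul_inv_add_inv_of_eq_sub hBsplit hB hMinv]
end
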